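/- If γ, δ, σ, ε, ω : ℝ → ℝ are essentially bounded functions, g is the Arrhenius function, and for u = (u₁, u₂) ∈ L²(ℝ)² we define F(u)(x) = γ(x)u₁(x) + δ(x)g(u₁(x))u₁(x) + σ(x)g(u₁(x)) + ε(x)u₂(x) + (ε(x)+ω(x))(-u₁(x)), then F maps L²(ℝ)² to L²(ℝ) and is Lipschitz: ‖F(v) - F(w)‖_{L²} ≤ κ·max(‖v₁-w₁‖_{L²}, ‖v₂-w₂‖_{L²}) for a constant κ depending only on E and the L∞-norms of the coefficients. -/

import Mathlib

/-! For `0 < b ≤ a`, writing `exp (-E / b) = exp (-E / a) · exp (-(E / b - E / a))` and using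
`1 - t ≤ exp (-t)` gives `g a - g b ≤ g a · E (a - b) / (a b)`. Together with `g a ≤ a / E` and
`g a ≤ 4 (a / E)²` this shows that the monotone maps `g` and `θ ↦ g θ · θ` are Lipschitz with
constants `8 / E` and `2`. Hence `|F v - F w| ≤ K (|v₁ - w₁| + |v₂ - w₂|)` almost everywhere, with
`K` controlled by `E` and the essential suprema of the coefficients; taking L² norms gives the
Lipschitz bound, and `w = 0` (where `F 0 = 0`) gives `F u ∈ L²`. -/

open MeasureTheory
open scoped NNReal ENNReal

noncomputable def arrhenius (E : ℝ) (θ : ℝ) : ℝ :=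
  if 0 < θ then Real.exp (-E / θ) else 0

/-- The source map `F(u)(x) = γu₁ + δ g(u₁)u₁ + σ g(u₁) + ε u₂ + (ε+ω)(-u₁)`. -/
noncomputable def sourceMap (E : ℝ) (γ δ σ ε ω : ℝ → ℝ) (u₁ u₂ : ℝ → ℝ) (x : ℝ) : ℝ :=
  γ x * u₁ x + δ x * arrhenius E (u₁ x) * u₁ x + σ x * arrhenius E (u₁ x)
    + ε x * u₂ x + (ε x + ω x) * (-u₁ x)

open Real

lemma Monotone.abs_sub_le_of_sub_le {f : ℝ → ℝ} {K : ℝ} (hf : Monotone f)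
    (h : ∀ a b, b ≤ a → f a - f b ≤ K * (a - b)) (a b : ℝ) : |f a - f b| ≤ K * |a - b| := by
  wlog hba : b ≤ a generalizing a b
  · rw [abs_sub_comm, abs_sub_comm a]; exact this b a (le_of_not_ge hba)
  rw [abs_of_nonneg (sub_nonneg.2 (hf hba)), abs_of_nonneg (sub_nonneg.2 hba)]
  exact h a b hba

section Arrhenius

variable {E a b θ : ℝ}

lemma arrhenius_of_pos (h : 0 < θ) : arrhenius E θ = exp (-E / θ) := if_pos h

lemma arrhenius_of_nonpos (h : θ ≤ 0) : arrhenius E θ = 0 := if_neg h.not_gt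

lemma arrhenius_nonneg (E θ : ℝ) : 0 ≤ arrhenius E θ := by
  unfold arrhenius; split_ifs <;> positivity

lemma arrhenius_le_one (hE : 0 ≤ E) (θ : ℝ) : arrhenius E θ ≤ 1 := by
  rcases le_or_gt θ 0 with hθ | hθ
  · simp [arrhenius_of_nonpos hθ]
  · rw [arrhenius_of_pos hθ, exp_le_one_iff, neg_div, neg_nonpos]; positivity

lemma arrhenius_le_div (hE : 0 < E) (hθ : 0 ≤ θ) : arrhenius E θ ≤ θ / E := by
  rcases hθ.eq_or_lt with rfl | hθ
  · simp [arrhenius_of_nonpos le_rfl]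
  rw [arrhenius_of_pos hθ, neg_div, exp_neg, inv_le_comm₀ (exp_pos _) (by positivity), inv_div]
  linarith [add_one_le_exp (E / θ)]

lemma arrhenius_eq_arrhenius_half_sq (E θ : ℝ) : arrhenius E θ = arrhenius (E / 2) θ ^ 2 := by
  rcases le_or_gt θ 0 with hθ | hθ
  · simp [arrhenius_of_nonpos hθ]
  · rw [arrhenius_of_pos hθ, arrhenius_of_pos hθ, ← exp_nat_mul]; ring_nf

lemma arrhenius_le_sq (hE : 0 < E) (hθ : 0 ≤ θ) : arrhenius E θ ≤ 4 * (θ / E) ^ 2 := by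
  rw [arrhenius_eq_arrhenius_half_sq]
  calc arrhenius (E / 2) θ ^ 2 ≤ (θ / (E / 2)) ^ 2 := by
        gcongr
        · exact arrhenius_nonneg _ _
        · exact arrhenius_le_div (by positivity) hθ
    _ = 4 * (θ / E) ^ 2 := by field_simp; ring

lemma arrhenius_monotone (hE : 0 ≤ E) : Monotone (arrhenius E) := by
  intro b a hba
  rcases le_or_gt b 0 with hb | hb
  · rw [arrhenius_of_nonpos hb]; exact arrhenius_nonneg _ _
  rw [arrhenius_of_pos hb, arrhenius_of_pos (hb.trans_le hba), exp_le_exp, neg_div, neg_div,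
    neg_le_neg_iff]
  exact div_le_div_of_nonneg_left hE hb hba

lemma arrhenius_sub_le_mul (hb : 0 < b) (hba : b ≤ a) :
    arrhenius E a - arrhenius E b ≤ arrhenius E a * (E * (a - b) / (a * b)) := by
  have ha : 0 < a := hb.trans_le hba
  have hsplit : arrhenius E b = arrhenius E a * exp (-(E * (a - b) / (a * b))) := by
    rw [arrhenius_of_pos ha, arrhenius_of_pos hb, ← exp_add]; congr 1; field_simp; ring
  have := one_sub_le_exp_neg (E * (a - b) / (a * b))
  rw [hsplit]
  nlinarith [arrhenius_nonneg E a]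

lemma arrhenius_sub_le (hE : 0 < E) (hba : b ≤ a) :
    arrhenius E a - arrhenius E b ≤ 8 / E * (a - b) := by
  rcases le_or_gt a 0 with ha | ha
  · rw [arrhenius_of_nonpos ha]
    have : 0 ≤ 8 / E * (a - b) := mul_nonneg (by positivity) (by linarith)
    linarith [arrhenius_nonneg E b]
  rcases le_or_gt b (a / 2) with hb | hb
  · calc arrhenius E a - arrhenius E b ≤ a / E := by
          linarith [arrhenius_le_div hE ha.le, arrhenius_nonneg E b]
      _ ≤ 8 / E * (a - b) := by
          rw [div_mul_eq_mul_div]; gcongr; linarith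
  · have hb0 : 0 < b := by linarith
    calc arrhenius E a - arrhenius E b ≤ arrhenius E a * (E * (a - b) / (a * b)) :=
          arrhenius_sub_le_mul hb0 hba
      _ ≤ 4 * (a / E) ^ 2 * (E * (a - b) / (a * b)) := by
          gcongr; exact arrhenius_le_sq hE ha.le
      _ = 4 * a / b * ((a - b) / E) := by field_simp
      _ ≤ 8 * ((a - b) / E) := by
          gcongr; rw [div_le_iff₀ hb0]; linarith
      _ = 8 / E * (a - b) := by ring

lemma arrhenius_mul_self_monotone (hE : 0 ≤ E) : Monotone fun θ => arrhenius E θ * θ := by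
  intro b a hba
  dsimp only
  rcases le_or_gt b 0 with hb | hb
  · rw [arrhenius_of_nonpos hb, zero_mul]
    rcases le_or_gt a 0 with ha | ha
    · rw [arrhenius_of_nonpos ha, zero_mul]
    · exact mul_nonneg (arrhenius_nonneg _ _) ha.le
  · exact mul_le_mul (arrhenius_monotone hE hba) hba hb.le (arrhenius_nonneg _ _)

lemma arrhenius_mul_self_sub_le (hE : 0 < E) (hba : b ≤ a) :
    arrhenius E a * a - arrhenius E b * b ≤ 2 * (a - b) := by
  rcases le_or_gt b 0 with hb | hb
  · rw [arrhenius_of_nonpos hb, zero_mul, sub_zero]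
    rcases le_or_gt a 0 with ha | ha
    · rw [arrhenius_of_nonpos ha]; linarith
    · nlinarith [arrhenius_le_one hE.le a]
  have ha : 0 < a := hb.trans_le hba
  have hincr : b * (arrhenius E a - arrhenius E b) ≤ a - b :=
    calc b * (arrhenius E a - arrhenius E b)
        ≤ b * (arrhenius E a * (E * (a - b) / (a * b))) := by
          gcongr; exact arrhenius_sub_le_mul hb hba
      _ ≤ b * (a / E * (E * (a - b) / (a * b))) := by
          gcongr; exact arrhenius_le_div hE ha.le
      _ = a - b := by field_simp
  nlinarith [arrhenius_le_one hE.le a]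

lemma abs_arrhenius_sub_le (hE : 0 < E) (a b : ℝ) :
    |arrhenius E a - arrhenius E b| ≤ 8 / E * |a - b| :=
  (arrhenius_monotone hE.le).abs_sub_le_of_sub_le (fun _ _ => arrhenius_sub_le hE) a b

lemma abs_arrhenius_mul_self_sub_le (hE : 0 < E) (a b : ℝ) :
    |arrhenius E a * a - arrhenius E b * b| ≤ 2 * |a - b| :=
  (arrhenius_mul_self_monotone hE.le).abs_sub_le_of_sub_le
    (fun _ _ => arrhenius_mul_self_sub_le hE) a b

lemma measurable_arrhenius (E : ℝ) : Measurable (arrhenius E) :=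
  Measurable.ite measurableSet_Ioi (by fun_prop) measurable_const

end Arrhenius

section SourceMap

variable {E : ℝ} {γ δ σ ε ω : ℝ → ℝ}

lemma abs_sourceMap_sub_le (hE : 0 < E) {C x : ℝ} (hγ : |γ x| ≤ C) (hδ : |δ x| ≤ C)
    (hσ : |σ x| ≤ C) (hε : |ε x| ≤ C) (hω : |ω x| ≤ C) (v₁ v₂ w₁ w₂ : ℝ → ℝ) :
    |sourceMap E γ δ σ ε ω v₁ v₂ x - sourceMap E γ δ σ ε ω w₁ w₂ x| ≤
      C * (5 + 8 / E) * (|v₁ x - w₁ x| + |v₂ x - w₂ x|) := by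
  set d₁ := v₁ x - w₁ x
  set d₂ := v₂ x - w₂ x
  have hg := abs_arrhenius_sub_le hE (v₁ x) (w₁ x)
  have hh := abs_arrhenius_mul_self_sub_le hE (v₁ x) (w₁ x)
  have hdiff : sourceMap E γ δ σ ε ω v₁ v₂ x - sourceMap E γ δ σ ε ω w₁ w₂ x =
      γ x * d₁ + δ x * (arrhenius E (v₁ x) * v₁ x - arrhenius E (w₁ x) * w₁ x)
        + σ x * (arrhenius E (v₁ x) - arrhenius E (w₁ x)) + ε x * d₂ - (ε x + ω x) * d₁ := by
    simp only [sourceMap, d₁, d₂]; ring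
  have hC : 0 ≤ C := (abs_nonneg _).trans hγ
  have h₁ : |γ x * d₁| ≤ C * |d₁| := by rw [abs_mul]; gcongr
  have h₂ : |δ x * (arrhenius E (v₁ x) * v₁ x - arrhenius E (w₁ x) * w₁ x)| ≤ C * (2 * |d₁|) := by
    rw [abs_mul]; gcongr
  have h₃ : |σ x * (arrhenius E (v₁ x) - arrhenius E (w₁ x))| ≤ C * (8 / E * |d₁|) := by
    rw [abs_mul]; gcongr
  have h₄ : |ε x * d₂| ≤ C * |d₂| := by rw [abs_mul]; gcongr
  have h₅ : |(ε x + ω x) * d₁| ≤ (C + C) * |d₁| := by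
    rw [abs_mul]; gcongr; exact (abs_add_le _ _).trans (add_le_add hε hω)
  have hd₂ : 0 ≤ C * (4 + 8 / E) * |d₂| := by positivity
  rw [hdiff, abs_le]
  rw [abs_le] at h₁ h₂ h₃ h₄ h₅
  constructor <;> linarith

lemma sourceMap_zero_zero : sourceMap E γ δ σ ε ω 0 0 = 0 := by
  ext x; simp [sourceMap, arrhenius]

lemma aestronglyMeasurable_sourceMap {μ : Measure ℝ} (hγ : AEStronglyMeasurable γ μ)
    (hδ : AEStronglyMeasurable δ μ) (hσ : AEStronglyMeasurable σ μ)
    (hε : AEStronglyMeasurable ε μ) (hω : AEStronglyMeasurable ω μ) {u₁ u₂ : ℝ → ℝ}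
    (hu₁ : AEStronglyMeasurable u₁ μ) (hu₂ : AEStronglyMeasurable u₂ μ) :
    AEStronglyMeasurable (sourceMap E γ δ σ ε ω u₁ u₂) μ := by
  have hg : AEStronglyMeasurable (fun x => arrhenius E (u₁ x)) μ :=
    ((measurable_arrhenius E).comp_aemeasurable hu₁.aemeasurable).aestronglyMeasurable
  unfold sourceMap
  fun_prop

end SourceMap

section Lp

variable {α F G H : Type*} [MeasurableSpace α] {μ : Measure α}
  [NormedAddCommGroup F] [NormedAddCommGroup G] [NormedAddCommGroup H]

lemma MeasureTheory.MemLp.ae_norm_le_toReal_eLpNorm_top {f : α → F} (hf : MemLp f ⊤ μ) :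
    ∀ᵐ x ∂μ, ‖f x‖ ≤ (eLpNorm f ⊤ μ).toReal := by
  filter_upwards [ae_le_eLpNormEssSup (f := f) (μ := μ)] with x hx
  rw [← toReal_enorm]
  exact ENNReal.toReal_mono hf.eLpNorm_ne_top (by rwa [eLpNorm_exponent_top])

lemma eLpNorm_le_of_ae_norm_le_mul_add {f : α → F} {a : α → G} {b : α → H} {K : ℝ}
    {p : ℝ≥0∞} (hp : 1 ≤ p) (ha : AEStronglyMeasurable a μ) (hb : AEStronglyMeasurable b μ)
    (h : ∀ᵐ x ∂μ, ‖f x‖ ≤ K * (‖a x‖ + ‖b x‖)) :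
    eLpNorm f p μ ≤ ENNReal.ofReal (2 * K) * max (eLpNorm a p μ) (eLpNorm b p μ) := by
  have h' : ∀ᵐ x ∂μ, ‖f x‖ ≤ K * ‖‖a x‖ + ‖b x‖‖ := by
    filter_upwards [h] with x hx
    rwa [Real.norm_of_nonneg (by positivity)]
  calc eLpNorm f p μ ≤ ENNReal.ofReal K * eLpNorm (fun x => ‖a x‖ + ‖b x‖) p μ :=
        eLpNorm_le_mul_eLpNorm_of_ae_le_mul h' p
    _ ≤ ENNReal.ofReal K * (eLpNorm a p μ + eLpNorm b p μ) := by
        gcongr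
        exact (eLpNorm_add_le ha.norm hb.norm hp).trans_eq (by rw [eLpNorm_norm, eLpNorm_norm])
    _ ≤ ENNReal.ofReal K * (2 * max (eLpNorm a p μ) (eLpNorm b p μ)) := by
        gcongr
        rw [two_mul]
        exact add_le_add (le_max_left _ _) (le_max_right _ _)
    _ = ENNReal.ofReal (2 * K) * max (eLpNorm a p μ) (eLpNorm b p μ) := by
        rw [ENNReal.ofReal_mul zero_le_two, ENNReal.ofReal_ofNat]; ring

end Lp

theorem sourceMap_lipschitz (E : ℝ) (hE : 0 < E) (γ δ σ ε ω : ℝ → ℝ)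
    (hγ : MemLp γ ⊤ volume) (hδ : MemLp δ ⊤ volume) (hσ : MemLp σ ⊤ volume)
    (hε : MemLp ε ⊤ volume) (hω : MemLp ω ⊤ volume) :
    (∀ u₁ u₂ : ℝ → ℝ, MemLp u₁ 2 volume → MemLp u₂ 2 volume →
      MemLp (sourceMap E γ δ σ ε ω u₁ u₂) 2 volume) ∧
    ∃ κ : ℝ≥0, 0 < κ ∧ ∀ v₁ v₂ w₁ w₂ : ℝ → ℝ,
      MemLp v₁ 2 volume → MemLp v₂ 2 volume →
      MemLp w₁ 2 volume → MemLp w₂ 2 volume →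
      eLpNorm (fun x => sourceMap E γ δ σ ε ω v₁ v₂ x - sourceMap E γ δ σ ε ω w₁ w₂ x)
          2 volume ≤
        κ * max (eLpNorm (fun x => v₁ x - w₁ x) 2 volume)
                (eLpNorm (fun x => v₂ x - w₂ x) 2 volume) := by
  set C := 1 + ((eLpNorm γ ⊤ volume).toReal + (eLpNorm δ ⊤ volume).toReal +
    (eLpNorm σ ⊤ volume).toReal + (eLpNorm ε ⊤ volume).toReal + (eLpNorm ω ⊤ volume).toReal)
  set K := C * (5 + 8 / E)
  have hbound : ∀ v₁ v₂ w₁ w₂ : ℝ → ℝ, ∀ᵐ x ∂volume,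
      |sourceMap E γ δ σ ε ω v₁ v₂ x - sourceMap E γ δ σ ε ω w₁ w₂ x| ≤
        K * (|v₁ x - w₁ x| + |v₂ x - w₂ x|) := by
    intro v₁ v₂ w₁ w₂
    filter_upwards [hγ.ae_norm_le_toReal_eLpNorm_top, hδ.ae_norm_le_toReal_eLpNorm_top,
      hσ.ae_norm_le_toReal_eLpNorm_top, hε.ae_norm_le_toReal_eLpNorm_top,
      hω.ae_norm_le_toReal_eLpNorm_top] with x h₁ h₂ h₃ h₄ h₅
    have h₀ (f : ℝ → ℝ) : 0 ≤ (eLpNorm f ⊤ volume).toReal := ENNReal.toReal_nonneg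
    simp only [Real.norm_eq_abs] at h₁ h₂ h₃ h₄ h₅
    refine abs_sourceMap_sub_le hE ?_ ?_ ?_ ?_ ?_ v₁ v₂ w₁ w₂ <;>
      linarith [h₀ γ, h₀ δ, h₀ σ, h₀ ε, h₀ ω]
  refine ⟨fun u₁ u₂ hu₁ hu₂ => ?_, (2 * K).toNNReal, Real.toNNReal_pos.2 (by positivity),
    fun v₁ v₂ w₁ w₂ hv₁ hv₂ hw₁ hw₂ => ?_⟩
  · refine (hu₁.norm.add hu₂.norm).of_le_mul (c := K)
      (aestronglyMeasurable_sourceMap hγ.1 hδ.1 hσ.1 hε.1 hω.1 hu₁.1 hu₂.1) ?_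
    filter_upwards [hbound u₁ u₂ 0 0] with x hx
    have hsum : 0 ≤ |u₁ x| + |u₂ x| := by positivity
    simpa [sourceMap_zero_zero, abs_of_nonneg hsum] using hx
  · exact eLpNorm_le_of_ae_norm_le_mul_add one_le_two (hv₁.1.sub hw₁.1) (hv₂.1.sub hw₂.1)
      (hbound v₁ v₂ w₁ w₂)
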